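/- Let R be a ring and C a class of Gorenstein projective R-modules which is Ω^{-1}-closed (every C ∈ C embeds in a projective with cokernel in C). If Tor_i^R(I, C) = 0 for all C ∈ C, all injective right R-modules I, and all i > 0, then every module in C is PGF. -/

import Mathlib

universe u v

open Function

section NCTensor

variable (S : Type u) [Ring S]

/-- The balancing relations for the tensor product `I ⊗_S M` of a right `S`-module `I`
with a left `S`-module `M`, inside `I ⊗_ℤ M`. -/
def ncRel (I : Type u) [AddCommGroup I] [Module Sᵐᵒᵖ I]
    (M : Type u) [AddCommGroup M] [Module S M] : Submodule ℤ (TensorProduct ℤ I M) :=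
  Submodule.span ℤ {z | ∃ (x : I) (s : S) (m : M),
    z = (MulOpposite.op s • x) ⊗ₜ[ℤ] m - x ⊗ₜ[ℤ] (s • m)}

/-- The tensor product `I ⊗_S M` of a right `S`-module `I` with a left `S`-module `M`
(as an abelian group). -/
def NCT (I : Type u) [AddCommGroup I] [Module Sᵐᵒᵖ I]
    (M : Type u) [AddCommGroup M] [Module S M] : Type u :=
  TensorProduct ℤ I M ⧸ ncRel S I M

noncomputable instance (I : Type u) [AddCommGroup I] [Module Sᵐᵒᵖ I]
    (M : Type u) [AddCommGroup M] [Module S M] : AddCommGroup (NCT S I M) :=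
  inferInstanceAs (AddCommGroup (TensorProduct ℤ I M ⧸ ncRel S I M))

/-- The map `I ⊗_S M → I ⊗_S N` induced by an `S`-linear map `f : M → N`. -/
noncomputable def nctMap (I : Type u) [AddCommGroup I] [Module Sᵐᵒᵖ I]
    {M N : Type u} [AddCommGroup M] [Module S M] [AddCommGroup N] [Module S N]
    (f : M →ₗ[S] N) : NCT S I M →ₗ[ℤ] NCT S I N :=
  Submodule.mapQ _ _ (LinearMap.lTensor I f.toAddMonoidHom.toIntLinearMap) (by
    apply Submodule.span_le.2
    rintro z ⟨x, s, m, rfl⟩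
    have hmem : (LinearMap.lTensor I f.toAddMonoidHom.toIntLinearMap)
        ((MulOpposite.op s • x) ⊗ₜ[ℤ] m - x ⊗ₜ[ℤ] (s • m)) ∈ ncRel S I N := by
      rw [map_sub, LinearMap.lTensor_tmul, LinearMap.lTensor_tmul]
      have h2 : f.toAddMonoidHom.toIntLinearMap (s • m) = s • f m := f.map_smul s m
      rw [h2]
      exact Submodule.subset_span ⟨x, s, f m, rfl⟩
    exact hmem)

end NCTensor

section Complexes

variable (S : Type u) [Ring S]

/-- A `ℤ`-indexed sequence of `S`-modules with maps `X (n+1) → X n`. -/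
structure ZComplex where
  X : ℤ → Type u
  [addX : ∀ n, AddCommGroup (X n)]
  [modX : ∀ n, Module S (X n)]
  d : ∀ n : ℤ, X (n + 1) →ₗ[S] X n

attribute [instance] ZComplex.addX ZComplex.modX

/-- `M` is a projectively coresolved Gorenstein flat (PGF) `S`-module: a syzygy of an acyclic
complex of projective `S`-modules which remains acyclic after tensoring with every injective
right `S`-module. -/
def IsPGF (M : Type u) [AddCommGroup M] [Module S M] : Prop :=
  ∃ P : ZComplex S,
    (∀ n, Module.Projective S (P.X n)) ∧
    (∀ n, Function.Exact (P.d (n + 1)) (P.d n)) ∧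
    (∀ (I : Type u) [AddCommGroup I] [Module Sᵐᵒᵖ I], Module.Injective Sᵐᵒᵖ I →
      ∀ n, Function.Exact (nctMap S I (P.d (n + 1))) (nctMap S I (P.d n))) ∧
    Nonempty ((LinearMap.range (P.d 0)) ≃ₗ[S] M)

/-- `M` is a Gorenstein projective `S`-module: a syzygy of an acyclic complex of projective
`S`-modules which stays acyclic under `Hom_S(-, Q)` for every projective `S`-module `Q`. -/
def IsGorensteinProjective (M : Type u) [AddCommGroup M] [Module S M] : Prop :=
  ∃ P : ZComplex S,
    (∀ n, Module.Projective S (P.X n)) ∧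
    (∀ n, Function.Exact (P.d (n + 1)) (P.d n)) ∧
    (∀ (Q : Type u) [AddCommGroup Q] [Module S Q], Module.Projective S Q →
      ∀ n, Function.Exact (fun φ : P.X n →ₗ[S] Q => φ.comp (P.d n))
        (fun ψ : P.X (n + 1) →ₗ[S] Q => ψ.comp (P.d (n + 1)))) ∧
    Nonempty ((LinearMap.range (P.d 0)) ≃ₗ[S] M)

/-- A (left) resolution of the `S`-module `M`. -/
structure NatRes (M : Type u) [AddCommGroup M] [Module S M] where
  F : ℕ → Type u
  [addF : ∀ n, AddCommGroup (F n)]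
  [modF : ∀ n, Module S (F n)]
  d : ∀ n : ℕ, F (n + 1) →ₗ[S] F n
  aug : F 0 →ₗ[S] M
  surj : Function.Surjective aug
  exact0 : Function.Exact (d 0) aug
  exact : ∀ n, Function.Exact (d (n + 1)) (d n)

attribute [instance] NatRes.addF NatRes.modF

/-- A class of `S`-modules. -/
def ModClass : Type (u + 1) :=
  ∀ (N : Type u) [AddCommGroup N] [Module S N], Prop

/-- `M` admits a resolution of length at most `n` by modules in the class `C`. -/
def HasResLen (C : ModClass S) (M : Type u) [AddCommGroup M] [Module S M] (n : ℕ) : Prop :=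
  ∃ ρ : NatRes S M, (∀ i, C (ρ.F i)) ∧ ∀ i, n < i → ∀ x : ρ.F i, x = 0

/-- The resolution dimension of `M` with respect to the class `C`, as an element of `ℕ∞`. -/
noncomputable def classDim (C : ModClass S) (M : Type u) [AddCommGroup M] [Module S M] : ℕ∞ :=
  sInf {e : ℕ∞ | ∃ n : ℕ, e = n ∧ HasResLen S C M n}

/-- The class of projective `S`-modules. -/
def projClass : ModClass S := fun N _ _ => Module.Projective S N

/-- The class of PGF `S`-modules. -/
def pgfClass : ModClass S := fun N _ _ => IsPGF S N

/-- The projective dimension of `M` as an element of `ℕ∞`. -/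
noncomputable def projDim (M : Type u) [AddCommGroup M] [Module S M] : ℕ∞ :=
  classDim S (projClass S) M

/-- The PGF dimension of `M` as an element of `ℕ∞`. -/
noncomputable def pgfDim (M : Type u) [AddCommGroup M] [Module S M] : ℕ∞ :=
  classDim S (pgfClass S) M

/-- A bundled injective `S`-module. -/
structure InjMod where
  carrier : Type u
  [addC : AddCommGroup carrier]
  [modC : Module S carrier]
  inj : Module.Injective S carrier

attribute [instance] InjMod.addC InjMod.modC

/-- `spli S`: the supremum of the projective dimensions of injective `S`-modules. -/
noncomputable def spli : ℕ∞ :=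
  sSup (Set.range fun I : InjMod S => projDim S I.carrier)

end Complexes

section Sfli

variable (R : Type u) [CommRing R]

/-- The class of flat `R`-modules. -/
def flatClass : ModClass R := fun N _ _ => Module.Flat R N

/-- The flat dimension of `M` as an element of `ℕ∞`. -/
noncomputable def flatDim (M : Type u) [AddCommGroup M] [Module R M] : ℕ∞ :=
  classDim R (flatClass R) M

/-- `sfli R`: the supremum of the flat dimensions of injective `R`-modules. -/
noncomputable def sfli : ℕ∞ :=
  sSup (Set.range fun I : InjMod R => flatDim R I.carrier)

end Sfli

section Trivial

variable (R : Type u) [CommRing R] (G : Type u) [Group G]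

/-- The augmentation `R`-algebra map `R[G] → R`. -/
noncomputable def augmentation : MonoidAlgebra R G →ₐ[R] R :=
  MonoidAlgebra.lift R R G 1

end Trivial

/-- The trivial `R[G]`-module `R`. -/
def Triv (R : Type u) (G : Type u) : Type u := R

section Trivial2

variable (R : Type u) [CommRing R] (G : Type u) [Group G]

instance : AddCommGroup (Triv R G) := inferInstanceAs (AddCommGroup R)

instance : Module R (Triv R G) := inferInstanceAs (Module R R)

noncomputable instance : Module (MonoidAlgebra R G) (Triv R G) :=
  Module.compHom R (augmentation R G).toRingHom

instance : IsScalarTower R (MonoidAlgebra R G) (Triv R G) :=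
  ⟨fun r x m => by
    show (augmentation R G) (r • x) • m = r • ((augmentation R G) x • m)
    rw [map_smul]
    exact mul_smul r ((augmentation R G) x) m⟩

/-- The PGF dimension of the group `G` over `R`: the PGF dimension of the trivial
`R[G]`-module `R`. -/
noncomputable def pgfGroupDim : ℕ∞ :=
  pgfDim (MonoidAlgebra R G) (Triv R G)

end Trivial2


/-- A witness of `Ω⁻¹`-closedness at a module `N`: a short exact sequence
`0 → N → P → D → 0` with `P` projective and `D` in the class `C`. -/
structure OmegaWitness (S : Type u) [Ring S] (C : ModClass S)
    (N : Type u) [AddCommGroup N] [Module S N] where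
  P : Type u
  [addP : AddCommGroup P]
  [modP : Module S P]
  projP : Module.Projective S P
  D : Type u
  [addD : AddCommGroup D]
  [modD : Module S D]
  memD : C D
  i : N →ₗ[S] P
  p : P →ₗ[S] D
  inj : Function.Injective i
  surj : Function.Surjective p
  exact : Function.Exact i p

attribute [instance] OmegaWitness.addP OmegaWitness.modP OmegaWitness.addD OmegaWitness.modD

/-!
Splice a projective resolution of `N` with the short exact sequences
`0 → Nₖ → Pₖ → Nₖ₊₁ → 0` (`N₀ = N`) supplied by `Ω⁻¹`-closedness. This gives an acyclic complex
of projectives in which `N` is the image of `d₀`. Any two consecutive differentials of it are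
consecutive differentials of the projective resolution of some `Nₖ ∈ C` obtained by splicing, so
Tor-vanishing makes the complex stay exact after tensoring with an injective module.
-/

noncomputable def LinearEquiv.ofInjectiveOfCompSurjective {R A M P : Type*} [Semiring R]
    [AddCommMonoid A] [Module R A] [AddCommMonoid M] [Module R M] [AddCommMonoid P] [Module R P]
    {i : M →ₗ[R] P} {f : A →ₗ[R] M} (hi : Function.Injective i) (hf : Function.Surjective f) :
    M ≃ₗ[R] LinearMap.range (i ∘ₗ f) :=
  (LinearEquiv.ofInjective i hi).trans
    (LinearEquiv.ofEq _ _ (LinearMap.range_comp_of_range_eq_top i (LinearMap.range_eq_top.2 hf)).symm)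

section FreeResolution

variable (S : Type u) [Ring S]

noncomputable def firstSyzygy (X : ModuleCat.{u} S) : ModuleCat.{u} S :=
  .of S (LinearMap.ker (Finsupp.linearCombination S id : (X →₀ S) →ₗ[S] X))

noncomputable def freeSyzygy (M : Type u) [AddCommGroup M] [Module S M] : ℕ → ModuleCat.{u} S
  | 0 => .of S M
  | n + 1 => firstSyzygy S (freeSyzygy M n)

noncomputable def NatRes.free (M : Type u) [AddCommGroup M] [Module S M] : NatRes S M where
  F n := freeSyzygy S M n →₀ S
  d _ := Submodule.subtype _ ∘ₗ Finsupp.linearCombination S id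
  aug := Finsupp.linearCombination S id
  surj := Finsupp.linearCombination_id_surjective S M
  exact0 := (Finsupp.linearCombination_id_surjective S _).comp_exact_iff_exact.2
    (LinearMap.exact_subtype_ker_map _)
  exact n := (Finsupp.linearCombination_id_surjective S _).comp_exact_iff_exact.2 <|
    (Submodule.injective_subtype _).comp_exact_iff_exact.2 <|
      LinearMap.exact_subtype_ker_map
        (Finsupp.linearCombination S id : (freeSyzygy S M (n + 1) →₀ S) →ₗ[S] _)

theorem NatRes.free_projective (M : Type u) [AddCommGroup M] [Module S M] (n : ℕ) :
    Module.Projective S ((NatRes.free S M).F n) :=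
  inferInstanceAs (Module.Projective S (_ →₀ S))

end FreeResolution

section Construction

variable {S : Type u} [Ring S] {C : ModClass S}

namespace NatRes

variable {M : Type u} [AddCommGroup M] [Module S M] (r : NatRes S M) (w : OmegaWitness S C M)

def spliceF (n : ℕ) : Type u := Nat.casesOn n w.P r.F

instance : ∀ n, AddCommGroup (r.spliceF w n)
  | 0 => inferInstanceAs (AddCommGroup w.P)
  | i + 1 => inferInstanceAs (AddCommGroup (r.F i))

instance : ∀ n, Module S (r.spliceF w n)
  | 0 => inferInstanceAs (Module S w.P)
  | i + 1 => inferInstanceAs (Module S (r.F i))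

noncomputable def spliceD : ∀ n, r.spliceF w (n + 1) →ₗ[S] r.spliceF w n
  | 0 => w.i ∘ₗ r.aug
  | i + 1 => r.d i

noncomputable def splice : NatRes S w.D where
  F := r.spliceF w
  d := r.spliceD w
  aug := w.p
  surj := w.surj
  exact0 := r.surj.comp_exact_iff_exact.2 w.exact
  exact
    | 0 => w.inj.comp_exact_iff_exact.2 r.exact0
    | i + 1 => r.exact i

theorem splice_projective (hr : ∀ i, Module.Projective S (r.F i)) :
    ∀ i, Module.Projective S ((r.splice w).F i)
  | 0 => w.projP
  | i + 1 => hr i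

end NatRes

variable (hΩ : ∀ (N : Type u) [AddCommGroup N] [Module S N], C N → Nonempty (OmegaWitness S C N))
  {N : Type u} [AddCommGroup N] [Module S N] (hN : C N)

noncomputable def cosyzygy : ℕ → {X : ModuleCat.{u} S // C X}
  | 0 => ⟨.of S N, hN⟩
  | k + 1 => ⟨.of S (hΩ _ (cosyzygy k).2).some.D, (hΩ _ (cosyzygy k).2).some.memD⟩

noncomputable def cosyzygyWitness (k : ℕ) : OmegaWitness S C (cosyzygy hΩ hN k).1 :=
  (hΩ _ (cosyzygy hΩ hN k).2).some

variable (ρ : NatRes S N)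

noncomputable def cosyzygyRes : ∀ k, NatRes S (cosyzygy hΩ hN k).1
  | 0 => ρ
  | k + 1 => (cosyzygyRes k).splice (cosyzygyWitness hΩ hN k)

theorem cosyzygyRes_projective (hρ : ∀ i, Module.Projective S (ρ.F i)) :
    ∀ k i, Module.Projective S ((cosyzygyRes hΩ hN ρ k).F i)
  | 0 => hρ
  | k + 1 => (cosyzygyRes hΩ hN ρ k).splice_projective _ (cosyzygyRes_projective hρ k)

noncomputable def completeComplexX : ℤ → Type u
  | .ofNat j => (cosyzygyRes hΩ hN ρ 1).F j
  | .negSucc k => (cosyzygyRes hΩ hN ρ (k + 2)).F 0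

noncomputable instance : ∀ n, AddCommGroup (completeComplexX hΩ hN ρ n)
  | .ofNat j => inferInstanceAs (AddCommGroup ((cosyzygyRes hΩ hN ρ 1).F j))
  | .negSucc k => inferInstanceAs (AddCommGroup ((cosyzygyRes hΩ hN ρ (k + 2)).F 0))

noncomputable instance : ∀ n, Module S (completeComplexX hΩ hN ρ n)
  | .ofNat j => inferInstanceAs (Module S ((cosyzygyRes hΩ hN ρ 1).F j))
  | .negSucc k => inferInstanceAs (Module S ((cosyzygyRes hΩ hN ρ (k + 2)).F 0))

noncomputable def completeComplex : ZComplex S where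
  X := completeComplexX hΩ hN ρ
  -- `negSucc k + 1` only reduces to a constructor once `k` is a numeral or a successor
  d
    | .ofNat j => (cosyzygyRes hΩ hN ρ 1).d j
    | .negSucc 0 => (cosyzygyRes hΩ hN ρ 2).d 0
    | .negSucc (k + 1) => (cosyzygyRes hΩ hN ρ (k + 3)).d 0

theorem completeComplex_projective (hρ : ∀ i, Module.Projective S (ρ.F i)) :
    ∀ n, Module.Projective S ((completeComplex hΩ hN ρ).X n)
  | .ofNat j => cosyzygyRes_projective hΩ hN ρ hρ 1 j
  | .negSucc k => cosyzygyRes_projective hΩ hN ρ hρ (k + 2) 0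

theorem completeComplex_d_pair_of_cosyzygyRes
    (Φ : ∀ {A B D : Type u} [AddCommGroup A] [Module S A] [AddCommGroup B] [Module S B]
      [AddCommGroup D] [Module S D], (A →ₗ[S] B) → (B →ₗ[S] D) → Prop)
    (h : ∀ k j, Φ ((cosyzygyRes hΩ hN ρ k).d (j + 1)) ((cosyzygyRes hΩ hN ρ k).d j)) :
    ∀ n, Φ ((completeComplex hΩ hN ρ).d (n + 1)) ((completeComplex hΩ hN ρ).d n)
  | .ofNat j => h 1 j
  | .negSucc 0 => h 2 0
  | .negSucc 1 => h 3 0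
  | .negSucc (k + 2) => h (k + 4) 0

end Construction

theorem omegaClosed_torVanishing_isPGF (S : Type u) [Ring S] (C : ModClass S)
    (homega : ∀ (N : Type u) [AddCommGroup N] [Module S N], C N →
      Nonempty (OmegaWitness S C N))
    (htor : ∀ (N : Type u) [AddCommGroup N] [Module S N], C N →
      ∀ (I : Type u) [AddCommGroup I] [Module Sᵐᵒᵖ I], Module.Injective Sᵐᵒᵖ I →
      ∀ (ρ : NatRes S N), (∀ i, Module.Projective S (ρ.F i)) →
      ∀ n, Function.Exact (nctMap S I (ρ.d (n + 1))) (nctMap S I (ρ.d n))) :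
    ∀ (N : Type u) [AddCommGroup N] [Module S N], C N → IsPGF S N := by
  intro N _ _ hN
  have hres := cosyzygyRes_projective homega hN _ (NatRes.free_projective S N)
  refine ⟨completeComplex homega hN (NatRes.free S N),
    completeComplex_projective homega hN _ (NatRes.free_projective S N),
    completeComplex_d_pair_of_cosyzygyRes homega hN _ (fun f g => Function.Exact f g)
      fun k j => (cosyzygyRes homega hN _ k).exact j,
    fun I _ _ hI => completeComplex_d_pair_of_cosyzygyRes homega hN _
      (fun f g => Function.Exact (nctMap S I f) (nctMap S I g))
      fun k j => htor _ (cosyzygy homega hN k).2 I hI _ (hres k) j,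
    ⟨(LinearEquiv.ofInjectiveOfCompSurjective (cosyzygyWitness homega hN 0).inj
      (NatRes.free S N).surj).symm⟩⟩
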